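/- Let n ≥ 1 and let S be a left-handed skew Boolean algebra freely generated by n distinct elements x_1,…,x_n. For a permutation (y_1,…,y_n) of (x_1,…,x_n) and 1 ≤ k ≤ n, set t(y,k) = (y_1∧⋯∧y_k)\(y_{k+1}∨⋯∨y_n) (left-associated, with t(y,n) = y_1∧⋯∧y_n). Then for permutations (y_1,…,y_n), (z_1,…,z_n) of (x_1,…,x_n) and 1 ≤ k, l ≤ n: t(y,k) D t(z,l) if and only if k = l and {y_1,…,y_k} = {z_1,…,z_l}; and t(y,k) = t(z,l) if and only if in addition y_1 = z_1. -/

import Mathlib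

universe u

/-- A skew Boolean algebra. -/
class SBA (S : Type u) where
  wedge : S → S → S
  vee : S → S → S
  diff : S → S → S
  zero : S
  wedge_assoc : ∀ x y z : S, wedge (wedge x y) z = wedge x (wedge y z)
  vee_assoc : ∀ x y z : S, vee (vee x y) z = vee x (vee y z)
  absorb1 : ∀ x y : S, wedge x (vee x y) = x
  absorb2 : ∀ x y : S, wedge (vee y x) x = x
  absorb3 : ∀ x y : S, vee x (wedge x y) = x
  absorb4 : ∀ x y : S, vee (wedge y x) x = x
  sdistrib1 : ∀ x y z : S, wedge x (vee y z) = vee (wedge x y) (wedge x z)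
  sdistrib2 : ∀ x y z : S, wedge (vee x y) z = vee (wedge x z) (wedge y z)
  zero_wedge : ∀ x : S, wedge zero x = zero
  wedge_zero : ∀ x : S, wedge x zero = zero
  zero_vee : ∀ x : S, vee zero x = x
  vee_zero : ∀ x : S, vee x zero = x
  diff_ax1 : ∀ x y : S, vee (wedge (wedge x y) x) (diff x y) = x
  diff_ax2 : ∀ x y : S, wedge (wedge (wedge x y) x) (diff x y) = zero
  diff_ax3 : ∀ x y : S, wedge (diff x y) (wedge (wedge x y) x) = zero

namespace SBA

scoped infixl:70 " ⋏ " => SBA.wedge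
scoped infixl:65 " ⋎ " => SBA.vee
scoped infixl:70 " ∖ " => SBA.diff

variable {S : Type u} [SBA S]

/-- Green's relation `D`: `x D y` iff `x⋏y⋏x = x` and `y⋏x⋏y = y`. -/
def Drel (x y : S) : Prop := x ⋏ y ⋏ x = x ∧ y ⋏ x ⋏ y = y

/-- The natural partial order: `x ≤ y` iff `x⋏y = x = y⋏x`. -/
def nle (x y : S) : Prop := x ⋏ y = x ∧ y ⋏ x = x

/-- An atom: a nonzero element with nothing strictly between it and `0`. -/
def IsAtom (a : S) : Prop := a ≠ zero ∧ ∀ x : S, nle x a → x = zero ∨ x = a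

/-- `X` generates `S`: the only subset of `S` containing `X` and `0` and closed
under the three operations is `S` itself. -/
def Generates (X : Set S) : Prop :=
  ∀ T : Set S, X ⊆ T → zero ∈ T →
    (∀ a b : S, a ∈ T → b ∈ T → a ⋏ b ∈ T ∧ a ⋎ b ∈ T ∧ a ∖ b ∈ T) →
    T = Set.univ

/-- A homomorphism of skew Boolean algebras. -/
def IsHom {T : Type u} [SBA T] (f : S → T) : Prop :=
  (∀ a b : S, f (a ⋏ b) = f a ⋏ f b) ∧ (∀ a b : S, f (a ⋎ b) = f a ⋎ f b) ∧
    (∀ a b : S, f (a ∖ b) = f a ∖ f b) ∧ f zero = zero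

end SBA

open SBA

/-- A left-handed skew Boolean algebra. -/
class LeftHanded (S : Type u) [SBA S] : Prop where
  lh_wedge : ∀ x y : S, x ⋏ y ⋏ x = x ⋏ y
  lh_vee : ∀ x y : S, x ⋎ y ⋎ x = y ⋎ x

/-- `S` is freely generated by `X` over the variety of all skew Boolean algebras. -/
def FreelyGenerates (S : Type u) [SBA S] (X : Set S) : Prop :=
  Generates X ∧
    ∀ (T : Type u) [SBA T], ∀ g : X → T,
      ∃ f : S → T, IsHom f ∧ ∀ x : X, f x = g x

/-- `S` is freely generated by `X` over the variety of left-handed skew Boolean algebras. -/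
def LFreelyGenerates (S : Type u) [SBA S] [LeftHanded S] (X : Set S) : Prop :=
  Generates X ∧
    ∀ (T : Type u) [SBA T] [LeftHanded T], ∀ g : X → T,
      ∃ f : S → T, IsHom f ∧ ∀ x : X, f x = g x

/-- Left-associated join of a list, with the empty join being `0`. -/
def listJoin {S : Type u} [SBA S] : List S → S
  | [] => SBA.zero
  | h :: t => t.foldl SBA.vee h

/-- Left-associated meet of a list, with the empty meet being `0`. -/
def listMeet {S : Type u} [SBA S] : List S → S
  | [] => SBA.zero
  | h :: t => t.foldl SBA.wedge h

/-- The term `(y₁⋏⋯⋏y_k) ∖ (y_{k+1}⋎⋯⋎y_n)` built from the list `l = [y₁,…,y_n]`,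
which for `k = n` is just `y₁⋏⋯⋏y_n`. -/
def atomTerm {S : Type u} [SBA S] (l : List S) (k : ℕ) : S :=
  if k < l.length then SBA.diff (listMeet (l.take k)) (listJoin (l.drop k))
  else listMeet l

/-!
In a left-handed skew Boolean algebra `x ⋏ p` depends only on the `D`-class of `p`. Hence a meet
is unchanged by permuting all factors but the first and stays in its `D`-class under any
permutation, while `w ⋏ (y_{k+1} ⋎ ⋯ ⋎ y_n)` is invariant under permutations of the join. This
gives both implications from right to left.

For the converse, freeness lets us colour the generators in the three-element algebra `{0, a, b}`
whose nonzero elements form one `D`-class: sending `y₁` to `a`, `y₂, …, y_k` to `b` and the other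
generators to `0` maps `t(y, k)` to `a`, while `t(z, l)` goes to `0` unless
`{z₁, …, z_l} = {y₁, …, y_k}`, and to `b` if moreover `z₁ ≠ y₁`.
-/

namespace SBA

section Basic

variable {S : Type u} [SBA S]

theorem wedge_self (x : S) : x ⋏ x = x := by
  simpa only [absorb3] using absorb1 x (x ⋏ x)

theorem diff_zero (x : S) : x ∖ zero = x := by
  simpa only [wedge_zero, zero_wedge, zero_vee] using diff_ax1 x zero

theorem zero_diff (y : S) : zero ∖ y = zero := by
  simpa only [zero_wedge, zero_vee] using diff_ax1 zero y

theorem vee_eq_zero_iff {x y : S} : x ⋎ y = zero ↔ x = zero ∧ y = zero := by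
  refine ⟨fun h => ⟨?_, ?_⟩, fun ⟨hx, hy⟩ => by rw [hx, hy, zero_vee]⟩
  · rw [← absorb1 x y, h, wedge_zero]
  · rw [← absorb2 y x, h, zero_wedge]

theorem vee_eq_right_of_wedge_eq {p q : S} (h : p ⋏ q = p) : p ⋎ q = q := by
  simpa only [h] using absorb4 q p

theorem eq_zero_of_drel_zero {u : S} (h : Drel u zero) : u = zero := by
  simpa only [wedge_zero, zero_wedge, eq_comm] using h.1

end Basic

section LeftHanded

variable {S : Type u} [SBA S] [LeftHanded S]

theorem drel_iff {u v : S} : Drel u v ↔ u ⋏ v = u ∧ v ⋏ u = v := by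
  simp only [Drel, LeftHanded.lh_wedge]

theorem Drel.refl (u : S) : Drel u u :=
  drel_iff.2 ⟨wedge_self u, wedge_self u⟩

theorem wedge_vee_diff (x y : S) : (x ⋏ y) ⋎ (x ∖ y) = x := by
  simpa only [LeftHanded.lh_wedge] using diff_ax1 x y

theorem wedge_wedge_diff (x y : S) : (x ⋏ y) ⋏ (x ∖ y) = zero := by
  simpa only [LeftHanded.lh_wedge] using diff_ax2 x y

theorem diff_wedge_wedge (x y : S) : (x ∖ y) ⋏ (x ⋏ y) = zero := by
  simpa only [LeftHanded.lh_wedge] using diff_ax3 x y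

theorem diff_wedge_self (x y : S) : (x ∖ y) ⋏ x = x ∖ y := by
  have h := congrArg (fun z => (x ∖ y) ⋏ z) (wedge_vee_diff x y)
  simpa only [sdistrib1, diff_wedge_wedge, zero_vee, wedge_self] using h.symm

theorem diff_wedge_right (x y : S) : (x ∖ y) ⋏ y = zero := by
  rw [← diff_wedge_wedge x y, ← wedge_assoc, diff_wedge_self]

theorem eq_of_wedge_eq_zero_of_vee_eq {c u v : S} (hu : c ⋏ u = zero) (hv : c ⋏ v = zero)
    (h : c ⋎ u = c ⋎ v) : u = v := by
  have hvu : v ⋏ u = u := by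
    have := absorb2 u c
    rwa [h, sdistrib2, hu, zero_vee] at this
  have huv : u ⋏ v = v := by
    have := absorb2 v c
    rwa [← h, sdistrib2, hv, zero_vee] at this
  calc u = v ⋏ u := hvu.symm
    _ = u ⋏ v ⋏ u := by rw [huv]
    _ = v := by rw [LeftHanded.lh_wedge, huv]

theorem vee_comm_of_wedge_eq_zero {a b : S} (h : b ⋏ a = zero) : a ⋎ b = b ⋎ a := by
  have hab : (a ⋎ b) ⋏ a = a := by rw [sdistrib2, h, wedge_self, vee_zero]
  have := absorb3 (a ⋎ b) a
  rwa [hab, LeftHanded.lh_vee, eq_comm] at this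

/-- Both `x ⋏ p` and `x ⋏ q` are complements of `x ∖ p` in `x`. -/
theorem wedge_congr_right {p q : S} (hpq : p ⋏ q = p) (hqp : q ⋏ p = q) (x : S) :
    x ⋏ p = x ⋏ q := by
  set c := x ∖ p
  have hcp : c ⋏ p = zero := diff_wedge_right x p
  have hcq : c ⋏ q = zero := by
    have := sdistrib1 c q p
    rwa [vee_eq_right_of_wedge_eq hqp, hcp, vee_zero, eq_comm] at this
  have hcxp : c ⋏ (x ⋏ p) = zero := by rw [← wedge_assoc, diff_wedge_self, hcp]
  have hcxq : c ⋏ (x ⋏ q) = zero := by rw [← wedge_assoc, diff_wedge_self, hcq]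
  have hxp : c ⋎ (x ⋏ p) = x := by
    rw [← vee_comm_of_wedge_eq_zero hcxp, wedge_vee_diff]
  have hxq : c ⋎ (x ⋏ q) = x := by
    rw [← vee_eq_right_of_wedge_eq hpq, sdistrib1, ← vee_assoc, hxp, absorb3]
  exact eq_of_wedge_eq_zero_of_vee_eq hcxp hcxq (hxp.trans hxq.symm)

theorem wedge_right_comm (x y z : S) : x ⋏ y ⋏ z = x ⋏ z ⋏ y := by
  have h (a b : S) : a ⋏ b ⋏ (b ⋏ a) = a ⋏ b := by
    rw [← wedge_assoc, wedge_assoc a b b, wedge_self, LeftHanded.lh_wedge]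
  simp only [wedge_assoc, wedge_congr_right (h y z) (h z y) x]

theorem diff_congr_right {x y z : S} (h : x ⋏ y = x ⋏ z) : x ∖ y = x ∖ z := by
  refine eq_of_wedge_eq_zero_of_vee_eq (wedge_wedge_diff x y) ?_ ?_
  · rw [h]; exact wedge_wedge_diff x z
  · rw [wedge_vee_diff, h, wedge_vee_diff]

theorem wedge_diff_eq_self {u m j : S} (hm : u ⋏ m = u) (hj : u ⋏ j = zero) : u ⋏ (m ∖ j) = u := by
  have hmj : u ⋏ (m ⋏ j) = zero := by rw [← wedge_assoc, hm, hj]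
  have := congrArg (u ⋏ ·) (wedge_vee_diff m j)
  rwa [sdistrib1, hmj, zero_vee, hm] at this

theorem Drel.diff {m₁ m₂ j₁ j₂ : S} (hm : Drel m₁ m₂) (hj : ∀ w, w ⋏ j₁ = w ⋏ j₂) :
    Drel (m₁ ∖ j₁) (m₂ ∖ j₂) := by
  have key {m₁ m₂ j₁ j₂ : S} (hm : m₁ ⋏ m₂ = m₁) (hj : ∀ w, w ⋏ j₁ = w ⋏ j₂) :
      (m₁ ∖ j₁) ⋏ (m₂ ∖ j₂) = m₁ ∖ j₁ :=
    wedge_diff_eq_self (by rw [← diff_wedge_self, wedge_assoc, hm])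
      (by rw [← hj, diff_wedge_right])
  obtain ⟨h₁₂, h₂₁⟩ := drel_iff.1 hm
  exact drel_iff.2 ⟨key h₁₂ hj, key h₂₁ fun w => (hj w).symm⟩

theorem drel_vee_vee (a b : S) : Drel (a ⋎ b) (b ⋎ a) := by
  have h (a b : S) : (a ⋎ b) ⋏ (b ⋎ a) = a ⋎ b := by rw [← LeftHanded.lh_vee a b, absorb1]
  exact drel_iff.2 ⟨h a b, h b a⟩

end LeftHanded

section Lists

variable {S : Type u} [SBA S]

instance : Std.Associative (wedge : S → S → S) := ⟨wedge_assoc⟩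

instance : Std.Associative (vee : S → S → S) := ⟨vee_assoc⟩

theorem foldl_wedge_zero (l : List S) : l.foldl wedge zero = zero := by
  induction l with
  | nil => rfl
  | cons a t ih => rw [List.foldl_cons, zero_wedge, ih]

theorem foldl_wedge_eq_zero_of_mem {l : List S} (h : zero ∈ l) (m : S) :
    l.foldl wedge m = zero := by
  obtain ⟨s, t, rfl⟩ := List.append_of_mem h
  rw [List.foldl_append, List.foldl_cons, wedge_zero, foldl_wedge_zero]

theorem listMeet_eq_zero_of_mem {l : List S} (h : zero ∈ l) : listMeet l = zero := by
  cases l with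
  | nil => rfl
  | cons a t =>
    rcases List.mem_cons.1 h with rfl | h
    · exact foldl_wedge_zero t
    · exact foldl_wedge_eq_zero_of_mem h a

theorem listJoin_cons (a : S) (t : List S) : listJoin (a :: t) = a ⋎ listJoin t := by
  cases t with
  | nil => exact (vee_zero a).symm
  | cons b t => exact List.foldl_assoc

theorem listJoin_eq_zero_iff {l : List S} : listJoin l = zero ↔ ∀ s ∈ l, s = zero := by
  induction l with
  | nil => simp [listJoin]
  | cons a t ih => rw [listJoin_cons, vee_eq_zero_iff, ih, List.forall_mem_cons]

theorem atomTerm_eq (l : List S) (k : ℕ) :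
    atomTerm l k = listMeet (l.take k) ∖ listJoin (l.drop k) := by
  unfold atomTerm
  split_ifs with h
  · rfl
  · rw [List.take_of_length_le (by omega), List.drop_of_length_le (by omega), listJoin, diff_zero]

theorem IsHom.map_listMeet {T : Type u} [SBA T] {f : S → T} (hf : IsHom f) (l : List S) :
    f (listMeet l) = listMeet (l.map f) := by
  cases l with
  | nil => exact hf.2.2.2
  | cons a t =>
    show f (t.foldl wedge a) = (t.map f).foldl wedge (f a)
    rw [List.foldl_map, List.foldl_hom f fun x y => (hf.1 x y).symm]

theorem IsHom.map_listJoin {T : Type u} [SBA T] {f : S → T} (hf : IsHom f) (l : List S) :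
    f (listJoin l) = listJoin (l.map f) := by
  cases l with
  | nil => exact hf.2.2.2
  | cons a t =>
    show f (t.foldl vee a) = (t.map f).foldl vee (f a)
    rw [List.foldl_map, List.foldl_hom f fun x y => (hf.2.1 x y).symm]

theorem IsHom.map_atomTerm {T : Type u} [SBA T] {f : S → T} (hf : IsHom f) (l : List S) (k : ℕ) :
    f (atomTerm l k) = atomTerm (l.map f) k := by
  rw [atomTerm_eq, atomTerm_eq, hf.2.2.1, hf.map_listMeet, hf.map_listJoin, List.map_take,
    List.map_drop]

theorem IsHom.map_drel {T : Type u} [SBA T] {f : S → T} (hf : IsHom f) {u v : S}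
    (h : Drel u v) : Drel (f u) (f v) := by
  simp only [Drel, ← hf.1, h.1, h.2, and_self]

variable [LeftHanded S]

theorem foldl_wedge_wedge (l : List S) (m s : S) :
    l.foldl wedge m ⋏ s = l.foldl wedge (m ⋏ s) := by
  induction l generalizing m with
  | nil => rfl
  | cons a t ih => rw [List.foldl_cons, ih, List.foldl_cons, wedge_right_comm]

theorem foldl_wedge_foldl_wedge (l : List S) (m : S) :
    l.foldl wedge (l.foldl wedge m) = l.foldl wedge m := by
  induction l generalizing m with
  | nil => rfl
  | cons a t ih =>
    rw [List.foldl_cons, List.foldl_cons, foldl_wedge_wedge, wedge_assoc, wedge_self, ih]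

theorem listMeet_cons_congr (a : S) {t₁ t₂ : List S} (h : t₁.Perm t₂) :
    listMeet (a :: t₁) = listMeet (a :: t₂) :=
  h.foldl_eq (rcomm := ⟨wedge_right_comm⟩) a

theorem listMeet_wedge_listMeet_of_perm {l₁ l₂ : List S} (h : l₁.Perm l₂) :
    listMeet l₁ ⋏ listMeet l₂ = listMeet l₁ := by
  match l₁, l₂, h with
  | [], [], _ => exact zero_wedge zero
  | [], _ :: _, h | _ :: _, [], h => simp at h
  | a₁ :: t₁, a₂ :: t₂, h =>
    have hself : t₁.foldl wedge a₁ ⋏ a₁ = t₁.foldl wedge a₁ := by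
      rw [foldl_wedge_wedge, wedge_self]
    calc t₁.foldl wedge a₁ ⋏ t₂.foldl wedge a₂
        = (a₂ :: t₂).foldl wedge (t₁.foldl wedge a₁) := List.foldl_assoc.symm
      _ = (a₁ :: t₁).foldl wedge (t₁.foldl wedge a₁) :=
        (h.foldl_eq (rcomm := ⟨wedge_right_comm⟩) _).symm
      _ = t₁.foldl wedge a₁ := by rw [List.foldl_cons, hself, foldl_wedge_foldl_wedge]

theorem drel_listMeet_of_perm {l₁ l₂ : List S} (h : l₁.Perm l₂) :
    Drel (listMeet l₁) (listMeet l₂) :=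
  drel_iff.2 ⟨listMeet_wedge_listMeet_of_perm h, listMeet_wedge_listMeet_of_perm h.symm⟩

theorem wedge_listJoin_congr {l₁ l₂ : List S} (h : l₁.Perm l₂) (w : S) :
    w ⋏ listJoin l₁ = w ⋏ listJoin l₂ := by
  induction h generalizing w with
  | nil => rfl
  | cons a _ ih => rw [listJoin_cons, listJoin_cons, sdistrib1, sdistrib1, ih]
  | swap a b t =>
    obtain ⟨hab, hba⟩ := drel_iff.1 (drel_vee_vee b a)
    simp only [listJoin_cons, ← vee_assoc, sdistrib1 w (_ ⋎ _) (listJoin t),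
      wedge_congr_right hab hba w]
  | trans _ _ ih₁ ih₂ => rw [ih₁, ih₂]

theorem drel_atomTerm_of_perm {l₁ l₂ : List S} {k : ℕ} (htake : (l₁.take k).Perm (l₂.take k))
    (hdrop : (l₁.drop k).Perm (l₂.drop k)) : Drel (atomTerm l₁ k) (atomTerm l₂ k) := by
  rw [atomTerm_eq, atomTerm_eq]
  exact (drel_listMeet_of_perm htake).diff (wedge_listJoin_congr hdrop)

theorem atomTerm_cons_succ_congr (a : S) {t₁ t₂ : List S} {k : ℕ}
    (htake : (t₁.take k).Perm (t₂.take k)) (hdrop : (t₁.drop k).Perm (t₂.drop k)) :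
    atomTerm (a :: t₁) (k + 1) = atomTerm (a :: t₂) (k + 1) := by
  simp only [atomTerm_eq, List.take_succ_cons, List.drop_succ_cons, listMeet_cons_congr a htake]
  exact diff_congr_right (wedge_listJoin_congr hdrop _)

end Lists

end SBA

/-- The three-element left-handed algebra `{0, a, b}`: `{a, b}` is a single `D`-class, on which
`⋏` is the left and `⋎` the right projection. -/
inductive ThreeL : Type u
  | o | a | b

namespace ThreeL

instance : SBA ThreeL where
  wedge
    | o, _ | _, o => o
    | x, _ => x
  vee
    | x, o => x
    | _, y => y
  diff
    | x, o => x
    | _, _ => o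
  zero := o
  wedge_assoc := by rintro (_ | _ | _) (_ | _ | _) (_ | _ | _) <;> rfl
  vee_assoc := by rintro (_ | _ | _) (_ | _ | _) (_ | _ | _) <;> rfl
  absorb1 := by rintro (_ | _ | _) (_ | _ | _) <;> rfl
  absorb2 := by rintro (_ | _ | _) (_ | _ | _) <;> rfl
  absorb3 := by rintro (_ | _ | _) (_ | _ | _) <;> rfl
  absorb4 := by rintro (_ | _ | _) (_ | _ | _) <;> rfl
  sdistrib1 := by rintro (_ | _ | _) (_ | _ | _) (_ | _ | _) <;> rfl
  sdistrib2 := by rintro (_ | _ | _) (_ | _ | _) (_ | _ | _) <;> rfl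
  zero_wedge := by rintro (_ | _ | _) <;> rfl
  wedge_zero := by rintro (_ | _ | _) <;> rfl
  zero_vee := by rintro (_ | _ | _) <;> rfl
  vee_zero := by rintro (_ | _ | _) <;> rfl
  diff_ax1 := by rintro (_ | _ | _) (_ | _ | _) <;> rfl
  diff_ax2 := by rintro (_ | _ | _) (_ | _ | _) <;> rfl
  diff_ax3 := by rintro (_ | _ | _) (_ | _ | _) <;> rfl

instance : LeftHanded ThreeL where
  lh_wedge := by rintro (_ | _ | _) (_ | _ | _) <;> rfl
  lh_vee := by rintro (_ | _ | _) (_ | _ | _) <;> rfl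

theorem a_ne_zero : (a : ThreeL) ≠ zero := nofun

theorem wedge_of_ne_zero (x : ThreeL) {y : ThreeL} (hy : y ≠ zero) : x ⋏ y = x := by
  cases x <;> cases y <;> first | rfl | exact absurd rfl hy

theorem diff_of_ne_zero (x : ThreeL) {y : ThreeL} (hy : y ≠ zero) : x ∖ y = zero := by
  cases x <;> cases y <;> first | rfl | exact absurd rfl hy

theorem listMeet_cons_of_forall_ne_zero (x : ThreeL) {t : List ThreeL}
    (h : ∀ s ∈ t, s ≠ zero) : listMeet (x :: t) = x := by
  show t.foldl wedge x = x
  induction t with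
  | nil => rfl
  | cons s t ih =>
    rw [List.forall_mem_cons] at h
    rw [List.foldl_cons, wedge_of_ne_zero x h.1, ih h.2]

theorem forall_of_atomTerm_ne_zero {L : List ThreeL} {k : ℕ} (h : atomTerm L k ≠ zero) :
    (∀ s ∈ L.take k, s ≠ zero) ∧ ∀ s ∈ L.drop k, s = zero := by
  rw [atomTerm_eq] at h
  refine ⟨fun s hs hs0 => h ?_, listJoin_eq_zero_iff.1 ?_⟩
  · rw [listMeet_eq_zero_of_mem (hs0 ▸ hs), zero_diff]
  · by_contra hj
    exact h (diff_of_ne_zero _ hj)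

theorem atomTerm_cons_succ (x : ThreeL) {t : List ThreeL} {k : ℕ}
    (htake : ∀ s ∈ t.take k, s ≠ zero) (hdrop : ∀ s ∈ t.drop k, s = zero) :
    atomTerm (x :: t) (k + 1) = x := by
  rw [atomTerm_eq, List.take_succ_cons, List.drop_succ_cons, listJoin_eq_zero_iff.2 hdrop,
    diff_zero, listMeet_cons_of_forall_ne_zero x htake]

theorem atomTerm_cons_succ_of_ne_zero {x : ThreeL} {t : List ThreeL} {k : ℕ}
    (h : atomTerm (x :: t) (k + 1) ≠ zero) : atomTerm (x :: t) (k + 1) = x := by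
  obtain ⟨htake, hdrop⟩ := forall_of_atomTerm_ne_zero h
  rw [List.take_succ_cons, List.forall_mem_cons] at htake
  exact atomTerm_cons_succ x htake.2 hdrop

variable {α : Type*}

open Classical in
noncomputable def headColouring (y₀ : α) (A : Set α) (s : α) : ThreeL :=
  if s = y₀ then a else if s ∈ A then b else o

theorem headColouring_ne_zero_iff {y₀ s : α} {A : Set α} (hy₀ : y₀ ∈ A) :
    headColouring y₀ A s ≠ zero ↔ s ∈ A := by
  unfold headColouring
  split_ifs with h₁ h₂
  · exact iff_of_true nofun (h₁ ▸ hy₀)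
  · exact iff_of_true nofun h₂
  · exact iff_of_false (not_not.2 rfl) h₂

theorem headColouring_eq_a_iff {y₀ s : α} {A : Set α} : headColouring y₀ A s = a ↔ s = y₀ := by
  unfold headColouring
  split_ifs <;> simp_all

theorem atomTerm_map_headColouring_self {y₀ : α} {t : List α} (hnd : (y₀ :: t).Nodup) (k : ℕ) :
    atomTerm ((y₀ :: t).map (headColouring y₀ {s | s ∈ (y₀ :: t).take (k + 1)})) (k + 1) = a := by
  have hy₀ : y₀ ∈ {s | s ∈ (y₀ :: t).take (k + 1)} := by simp
  rw [List.map_cons, atomTerm_cons_succ, headColouring_eq_a_iff]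
  · rw [← List.map_take, List.forall_mem_map]
    exact fun s hs => (headColouring_ne_zero_iff hy₀).2 (List.mem_cons_of_mem y₀ hs)
  · rw [← List.map_drop, List.forall_mem_map]
    intro s hs
    refine not_not.1 fun hs0 => ?_
    replace hs0 : s ∈ (y₀ :: t).take (k + 1) := (headColouring_ne_zero_iff hy₀).1 hs0
    exact List.disjoint_take_drop hnd le_rfl hs0 (by rwa [List.drop_succ_cons])

theorem setOf_mem_take_eq_of_atomTerm_map_ne_zero {y₀ : α} {A : Set α} {L : List α} {m : ℕ}
    (hy₀ : y₀ ∈ A) (hA : ∀ s ∈ A, s ∈ L) (h : atomTerm (L.map (headColouring y₀ A)) m ≠ zero) :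
    {s | s ∈ L.take m} = A := by
  obtain ⟨htake, hdrop⟩ := forall_of_atomTerm_ne_zero h
  rw [← List.map_take, List.forall_mem_map] at htake
  rw [← List.map_drop, List.forall_mem_map] at hdrop
  ext s
  refine ⟨fun hs => (headColouring_ne_zero_iff hy₀).1 (htake s hs), fun hs => ?_⟩
  rcases List.mem_append.1 ((List.take_append_drop m L).symm ▸ hA s hs) with hs' | hs'
  · exact hs'
  · exact absurd (hdrop s hs') ((headColouring_ne_zero_iff hy₀).2 hs)

theorem eq_of_atomTerm_map_headColouring_eq_a {y₀ z₀ : α} {A : Set α} {t : List α} {m : ℕ}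
    (h : atomTerm ((z₀ :: t).map (headColouring y₀ A)) (m + 1) = a) : z₀ = y₀ := by
  rw [List.map_cons, atomTerm_cons_succ_of_ne_zero (h ▸ a_ne_zero)] at h
  exact headColouring_eq_a_iff.1 h

end ThreeL

theorem List.perm_take_of_setOf_mem_take_eq {α : Type*} {l₁ l₂ : List α} {k m : ℕ}
    (h₁ : l₁.Nodup) (h₂ : l₂.Nodup) (h : {s | s ∈ l₁.take k} = {s | s ∈ l₂.take m}) :
    (l₁.take k).Perm (l₂.take m) :=
  (List.perm_ext_iff_of_nodup (h₁.sublist (List.take_sublist k l₁))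
    (h₂.sublist (List.take_sublist m l₂))).2 (Set.ext_iff.1 h)

theorem List.Perm.drop_of_take {α : Type*} {l₁ l₂ : List α} {k : ℕ} (h : l₁.Perm l₂)
    (htake : (l₁.take k).Perm (l₂.take k)) : (l₁.drop k).Perm (l₂.drop k) := by
  have h₂ : (l₂.take k ++ l₂.drop k).Perm (l₁.take k ++ l₂.drop k) := htake.symm.append_right _
  rw [List.take_append_drop] at h₂
  rw [← List.perm_append_left_iff (l₁.take k), List.take_append_drop]
  exact h.trans h₂

namespace SBA

variable {S : Type u} [SBA S]

def ThreeLExtensible (l : List S) : Prop :=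
  ∀ c : S → ThreeL.{u}, ∃ f : S → ThreeL, IsHom f ∧ ∀ s ∈ l, f s = c s

theorem exists_hom_atomTerm_eq_a {y₀ : S} {t l : List S} (hext : ThreeLExtensible (y₀ :: t))
    (hnd : (y₀ :: t).Nodup) (hperm : (y₀ :: t).Perm l) (k : ℕ) :
    ∃ f : S → ThreeL.{u}, IsHom f ∧ f (atomTerm (y₀ :: t) (k + 1)) = ThreeL.a ∧
      ∀ m, f (atomTerm l m) =
        atomTerm (l.map (ThreeL.headColouring y₀ {s | s ∈ (y₀ :: t).take (k + 1)})) m := by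
  obtain ⟨f, hf, hfc⟩ := hext (ThreeL.headColouring y₀ {s | s ∈ (y₀ :: t).take (k + 1)})
  refine ⟨f, hf, ?_, fun m => ?_⟩
  · rw [hf.map_atomTerm, List.map_congr_left hfc, ThreeL.atomTerm_map_headColouring_self hnd]
  · rw [hf.map_atomTerm, List.map_congr_left fun s hs => hfc s (hperm.symm.subset hs)]

theorem setOf_mem_take_eq_of_drel_atomTerm {y₀ : S} {t l : List S} {k m : ℕ}
    (hext : ThreeLExtensible (y₀ :: t)) (hnd : (y₀ :: t).Nodup) (hperm : (y₀ :: t).Perm l)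
    (h : Drel (atomTerm (y₀ :: t) (k + 1)) (atomTerm l m)) :
    {s | s ∈ (y₀ :: t).take (k + 1)} = {s | s ∈ l.take m} := by
  set A := {s | s ∈ (y₀ :: t).take (k + 1)}
  obtain ⟨f, hf, hfa, hfl⟩ := exists_hom_atomTerm_eq_a hext hnd hperm k
  have hD := hf.map_drel h
  rw [hfa, hfl] at hD
  refine (ThreeL.setOf_mem_take_eq_of_atomTerm_map_ne_zero (A := A) (L := l) List.mem_cons_self
    (fun s hs => hperm.subset (List.take_subset _ _ hs)) fun h0 => ?_).symm
  rw [h0] at hD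
  exact ThreeL.a_ne_zero (eq_zero_of_drel_zero hD)

theorem eq_of_atomTerm_cons_eq {y₀ z₀ : S} {t t' : List S} {k m : ℕ}
    (hext : ThreeLExtensible (y₀ :: t)) (hnd : (y₀ :: t).Nodup)
    (hperm : (y₀ :: t).Perm (z₀ :: t'))
    (h : atomTerm (y₀ :: t) (k + 1) = atomTerm (z₀ :: t') (m + 1)) : y₀ = z₀ := by
  obtain ⟨f, hf, hfa, hfl⟩ := exists_hom_atomTerm_eq_a hext hnd hperm k
  have := congrArg f h
  rw [hfa, hfl] at this
  exact (ThreeL.eq_of_atomTerm_map_headColouring_eq_a this.symm).symm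

variable [LeftHanded S] {l₁ l₂ : List S} {k m : ℕ}

theorem drel_atomTerm_iff (hext : ThreeLExtensible l₁) (hnd : l₁.Nodup) (hperm : l₁.Perm l₂)
    (hk : 0 < k) (hkl : k ≤ l₁.length) (hml : m ≤ l₂.length) :
    Drel (atomTerm l₁ k) (atomTerm l₂ m) ↔ k = m ∧ {s | s ∈ l₁.take k} = {s | s ∈ l₂.take m} := by
  have hnd₂ := hperm.nodup_iff.1 hnd
  have hlen₂ := hperm.length_eq
  refine ⟨fun hD => ?_, fun ⟨hkm, hset⟩ => ?_⟩
  · obtain ⟨y₀, t, rfl⟩ := List.exists_cons_of_length_pos (hk.trans_le hkl)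
    obtain ⟨k, rfl⟩ := Nat.exists_eq_add_one_of_ne_zero hk.ne'
    have hset := setOf_mem_take_eq_of_drel_atomTerm hext hnd hperm hD
    have hlen := (List.perm_take_of_setOf_mem_take_eq hnd hnd₂ hset).length_eq
    rw [List.length_take, List.length_take] at hlen
    exact ⟨by omega, hset⟩
  · subst hkm
    have htake := List.perm_take_of_setOf_mem_take_eq hnd hnd₂ hset
    exact drel_atomTerm_of_perm htake (hperm.drop_of_take htake)

theorem atomTerm_eq_atomTerm_iff (hext : ThreeLExtensible l₁) (hnd : l₁.Nodup)
    (hperm : l₁.Perm l₂) (hk : 0 < k) (hkl : k ≤ l₁.length) (hm : 0 < m) (hml : m ≤ l₂.length) :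
    atomTerm l₁ k = atomTerm l₂ m ↔
      k = m ∧ {s | s ∈ l₁.take k} = {s | s ∈ l₂.take m} ∧ l₁.head? = l₂.head? := by
  have hDrel := drel_atomTerm_iff hext hnd hperm hk hkl hml
  obtain ⟨y₀, t, rfl⟩ := List.exists_cons_of_length_pos (hk.trans_le hkl)
  obtain ⟨z₀, t', rfl⟩ := List.exists_cons_of_length_pos (hm.trans_le hml)
  obtain ⟨k, rfl⟩ := Nat.exists_eq_add_one_of_ne_zero hk.ne'
  obtain ⟨m, rfl⟩ := Nat.exists_eq_add_one_of_ne_zero hm.ne'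
  refine ⟨fun h => ?_, fun ⟨hkm, hset, hhead⟩ => ?_⟩
  · obtain ⟨hkm, hset⟩ := hDrel.1 (h ▸ Drel.refl _)
    exact ⟨hkm, hset, congrArg some (eq_of_atomTerm_cons_eq hext hnd hperm h)⟩
  · obtain rfl : y₀ = z₀ := Option.some.inj hhead
    obtain rfl : k = m := Nat.succ_injective hkm
    have htake := List.perm_take_of_setOf_mem_take_eq hnd (hperm.nodup_iff.1 hnd) hset
    exact atomTerm_cons_succ_congr y₀ htake.cons_inv (hperm.drop_of_take htake)

end SBA

theorem stmt5_general (n : ℕ) (S : Type u) [SBA S] [LeftHanded S]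
    (x : Fin n → S) (hinj : Function.Injective x)
    (hfree : LFreelyGenerates S (Set.range x))
    (ly lz : List S) (hy : List.Perm ly (List.ofFn x)) (hz : List.Perm lz (List.ofFn x))
    (k l : ℕ) (hk1 : 1 ≤ k) (hkn : k ≤ n) (hl1 : 1 ≤ l) (hln : l ≤ n) :
    (Drel (atomTerm ly k) (atomTerm lz l) ↔
      k = l ∧ {s : S | s ∈ ly.take k} = {s : S | s ∈ lz.take l}) ∧
    (atomTerm ly k = atomTerm lz l ↔
      k = l ∧ {s : S | s ∈ ly.take k} = {s : S | s ∈ lz.take l} ∧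
        ly.head? = lz.head?) := by
  have hnd : ly.Nodup := hy.nodup_iff.2 (List.nodup_ofFn.2 hinj)
  have hyz : ly.Perm lz := hy.trans hz.symm
  have hext : ThreeLExtensible ly := fun c => by
    obtain ⟨f, hf, hfc⟩ := hfree.2 ThreeL fun s => c s
    exact ⟨f, hf, fun s hs => hfc ⟨s, List.mem_ofFn.1 (hy.subset hs)⟩⟩
  have hkl : k ≤ ly.length := by simpa [hy.length_eq] using hkn
  have hll : l ≤ lz.length := by simpa [hz.length_eq] using hln
  exact ⟨drel_atomTerm_iff hext hnd hyz hk1 hkl hll,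
    atomTerm_eq_atomTerm_iff hext hnd hyz hk1 hkl hl1 hll⟩

theorem stmt5 (n : ℕ) (hn : 1 ≤ n) (S : Type u) [SBA S] [LeftHanded S]
    (x : Fin n → S) (hinj : Function.Injective x)
    (hfree : LFreelyGenerates S (Set.range x))
    (ly lz : List S) (hy : List.Perm ly (List.ofFn x)) (hz : List.Perm lz (List.ofFn x))
    (k l : ℕ) (hk1 : 1 ≤ k) (hkn : k ≤ n) (hl1 : 1 ≤ l) (hln : l ≤ n) :
    (Drel (atomTerm ly k) (atomTerm lz l) ↔
      k = l ∧ {s : S | s ∈ ly.take k} = {s : S | s ∈ lz.take l}) ∧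
    (atomTerm ly k = atomTerm lz l ↔
      k = l ∧ {s : S | s ∈ ly.take k} = {s : S | s ∈ lz.take l} ∧
        ly.head? = lz.head?) :=
  stmt5_general n S x hinj hfree ly lz hy hz k l hk1 hkn hl1 hln
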